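/- arXiv:1607.00735 — 4 statements merged into one kernel-verified Lean document; each statement's English description precedes it below -/
import Mathlib

section
/- Let n be a positive integer and let μ = (m_1 ≥ m_2 ≥ ⋯ ≥ m_k) be a partition of 2n in which every odd part occurs with even multiplicity. Then 4·Σ_{j=1}^n n(μ, 2j) = 2n + Σ_j m̃_j² + #{i : m_i is odd}, where μ̃ = (m̃_1, …, m̃_r) is the dual partition of μ. (Equivalently, Σ_{j=1}^n n(μ, 2j) = n/2 + ½·d where d = ½(Σ_j m̃_j² + #{i : m_i odd}) is the dimension of the centralizer in Sp_{2n}(ℂ) of a nilpotent element of Jordan type μ.) -/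
/-!
Write `S₀ ≤ S₁ ≤ ⋯ ≤ S_k` for the partial sums `m₁ + ⋯ + m_a` of `μ`. Then `n(μ, j)` counts
the `S_a < j`, so swapping the two sums gives
`2 Σ_j n(μ, 2j) + Σ_a S_a = (k + 1)·2n + #{a : S_a odd}`.
Adding the parts one at a time, largest first, shows `Σ_j m̃_j² + 2 Σ_a S_a = (2k + 1)·2n`.
Finally, in a decreasing partition whose odd parts have even multiplicity the odd parts come
in adjacent pairs, and each pair makes exactly one partial sum odd, so
`#{i : m_i odd} = 2·#{a : S_a odd}`.
-/

/-- `nIdx μ j` is the index `a` (1-based) such that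
`m₁ + ⋯ + m_{a-1} < j ≤ m₁ + ⋯ + m_a`, i.e. the least `a` with
`j ≤ m₁ + ⋯ + m_a`. -/
noncomputable def nIdx (μ : List ℕ) (j : ℕ) : ℕ := sInf {a : ℕ | j ≤ (μ.take a).sum}

open Finset

namespace List

theorem le_sum_of_mem_partialSums {M : Type*} [AddCommMonoid M] [PartialOrder M]
    [CanonicallyOrderedAdd M] {l : List M} {s : M} (hs : s ∈ l.partialSums) : s ≤ l.sum := by
  induction l generalizing s with
  | nil => simp_all
  | cons x l ih =>
    rw [partialSums_cons] at hs
    simp only [mem_cons, mem_map] at hs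
    rcases hs with rfl | ⟨t, ht, rfl⟩
    · exact zero_le
    · simpa using add_le_add_right (ih ht) x

theorem sum_partialSums_cons {M : Type*} [AddCommMonoid M] (x : M) (l : List M) :
    (x :: l).partialSums.sum = (l.length + 1) • x + l.partialSums.sum := by
  rw [partialSums_cons, sum_cons, zero_add, sum_map_add (f := fun _ => x) (g := fun s => s)]
  simp

end List

theorem nIdx_zero (μ : List ℕ) : nIdx μ 0 = 0 :=
  Nat.sInf_eq_zero.mpr (.inl (Nat.zero_le _))

theorem nIdx_cons {x j : ℕ} {l : List ℕ} (hj : 0 < j) (h : j ≤ (x :: l).sum) :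
    nIdx (x :: l) j = nIdx l (j - x) + 1 := by
  have hpos : 1 ≤ nIdx (x :: l) j := by
    refine Nat.one_le_iff_ne_zero.mpr fun h0 => ?_
    rcases Nat.sInf_eq_zero.mp h0 with h0 | h0
    · simp at h0; omega
    · exact (Set.eq_empty_iff_forall_notMem.mp h0) (x :: l).length (by simpa using h)
  rw [nIdx, ← Nat.sInf_add hpos]
  congr 2
  ext a
  simp only [Set.mem_ofPred_eq, List.take_succ_cons, List.sum_cons]
  omega

theorem nIdx_eq_countP_partialSums {μ : List ℕ} {j : ℕ} (h : j ≤ μ.sum) :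
    nIdx μ j = μ.partialSums.countP (· < j) := by
  induction μ generalizing j with
  | nil => simp_all [nIdx_zero]
  | cons x l ih =>
    rcases Nat.eq_zero_or_pos j with rfl | hj
    · simp [nIdx_zero]
    rw [nIdx_cons hj h, ih (by simp at h; omega), List.partialSums_cons, List.countP_cons,
      List.countP_map]
    simp only [decide_eq_true_eq, hj, if_true]
    congr 2
    funext s
    simp only [Function.comp_apply, decide_eq_decide]
    omega

theorem card_Icc_filter_lt_two_mul (s n : ℕ) : #{j ∈ Icc 1 n | s < 2 * j} = n - s / 2 := by
  rw [← Nat.card_Ioc (s / 2) n]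
  congr 1
  ext j
  simp only [mem_filter, mem_Icc, mem_Ioc]
  omega

theorem two_mul_sum_countP_lt_two_mul_add_sum {ps : List ℕ} {n : ℕ}
    (h : ∀ s ∈ ps, s ≤ 2 * n) :
    2 * ∑ j ∈ Icc 1 n, ps.countP (· < 2 * j) + ps.sum =
      ps.length * (2 * n) + ps.countP (fun s => Odd s) := by
  induction ps with
  | nil => simp
  | cons s ps ih =>
    have hs := h s List.mem_cons_self
    have ih := ih fun t ht => h t (List.mem_cons_of_mem s ht)
    simp only [List.countP_cons, sum_add_distrib, decide_eq_true_eq, sum_boole,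
      card_Icc_filter_lt_two_mul, List.sum_cons, List.length_cons, add_one_mul, Nat.cast_id]
    split_ifs with hodd <;> rw [← Nat.not_even_iff_odd, Nat.even_iff] at * <;> omega

theorem sum_Icc_ite_le {M : Type*} [AddCommMonoid M] (f : ℕ → M) {x N : ℕ} (h : x ≤ N) :
    ∑ j ∈ Icc 1 N, (if j ≤ x then f j else 0) = ∑ j ∈ Icc 1 x, f j := by
  rw [← sum_filter]
  congr 1
  ext j
  simp only [mem_filter, mem_Icc]
  omega

theorem sum_countP_le_eq_sum {l : List ℕ} {N : ℕ} (h : ∀ x ∈ l, x ≤ N) :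
    ∑ j ∈ Icc 1 N, l.countP (j ≤ ·) = l.sum := by
  induction l with
  | nil => simp
  | cons x l ih =>
    simp only [List.countP_cons, sum_add_distrib, decide_eq_true_eq,
      sum_Icc_ite_le (fun _ => 1) (h x List.mem_cons_self), sum_const, Nat.card_Icc,
      smul_eq_mul, mul_one, List.sum_cons, ih fun y hy => h y (List.mem_cons_of_mem x hy)]
    omega

theorem sum_sq_countP_le_add_two_mul_sum_partialSums {l : List ℕ} {N : ℕ}
    (hs : l.Pairwise (· ≥ ·)) (h : ∀ x ∈ l, x ≤ N) :
    ∑ j ∈ Icc 1 N, l.countP (j ≤ ·) ^ 2 + 2 * l.partialSums.sum =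
      (2 * l.length + 1) * l.sum := by
  induction l with
  | nil => simp
  | cons x l ih =>
    rw [List.pairwise_cons] at hs
    have hx := h x List.mem_cons_self
    have ih := ih hs.2 fun y hy => h y (List.mem_cons_of_mem x hy)
    have hsq : ∀ j, (x :: l).countP (j ≤ ·) ^ 2 =
        l.countP (j ≤ ·) ^ 2 + if j ≤ x then 2 * l.countP (j ≤ ·) + 1 else 0 := by
      intro j
      simp only [List.countP_cons, decide_eq_true_eq]
      split_ifs <;> ring
    -- `x` is the largest part, so the first `x` columns of `l` already hold all of `l`
    have hdual : ∑ j ∈ Icc 1 x, l.countP (j ≤ ·) = l.sum := sum_countP_le_eq_sum hs.1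
    simp only [hsq, sum_add_distrib, sum_Icc_ite_le _ hx, ← mul_sum, hdual, sum_const,
      Nat.card_Icc, Nat.add_sub_cancel, smul_eq_mul, mul_one, List.sum_partialSums_cons,
      List.sum_cons, List.length_cons]
    linarith

inductive OddPartsPaired : List ℕ → Prop
  | nil : OddPartsPaired []
  | cons_even {x : ℕ} {l : List ℕ} : Even x → OddPartsPaired l → OddPartsPaired (x :: l)
  | cons_odd {x y : ℕ} {l : List ℕ} : Odd x → Odd y → OddPartsPaired l →
      OddPartsPaired (x :: y :: l)

namespace OddPartsPaired

theorem of_pairwise_ge :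
    ∀ {l : List ℕ}, l.Pairwise (· ≥ ·) → (∀ x ∈ l, Odd x → Even (l.count x)) → OddPartsPaired l
  | [], _, _ => .nil
  | [x], _, h =>
    .cons_even (Nat.not_odd_iff_even.mp fun hx => by simpa using h x (by simp) hx) .nil
  | x :: y :: l, hs, h => by
    by_cases hx : Odd x
    · obtain rfl : y = x := by
        have hxy : y ≤ x := List.rel_of_pairwise_cons hs List.mem_cons_self
        have hmem : x ∈ y :: l := by
          have := h x List.mem_cons_self hx
          rw [List.count_cons_self] at this
          exact List.count_pos_iff.mp (by rcases this with ⟨t, ht⟩; omega)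
        rcases List.mem_cons.mp hmem with rfl | hxl
        · rfl
        · exact le_antisymm hxy (List.rel_of_pairwise_cons hs.of_cons hxl)
      refine .cons_odd hx hx (of_pairwise_ge hs.of_cons.of_cons fun z hz hzodd => ?_)
      have := h z (by simp [hz]) hzodd
      by_cases hzy : z = y
      · subst hzy
        simp only [List.count_cons_self] at this
        simpa [Nat.even_add_one] using this
      · simpa [List.count_cons, Ne.symm hzy] using this
    · refine .cons_even (Nat.not_odd_iff_even.mp hx)
        (of_pairwise_ge hs.of_cons fun z hz hzodd => ?_)
      have hxz : x ≠ z := fun hxz => hx (hxz ▸ hzodd)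
      simpa [List.count_cons, hxz] using h z (List.mem_cons_of_mem x hz) hzodd

theorem countP_odd_eq {l : List ℕ} (h : OddPartsPaired l) :
    l.countP (fun x => Odd x) = 2 * l.partialSums.countP (fun s => Odd s) := by
  induction h with
  | nil => simp
  | @cons_even x l hx _ ih =>
    have hxs : ∀ s, Odd (x + s) ↔ Odd s := fun s => by
      simp only [Nat.odd_iff, Nat.even_iff] at *; omega
    simp [List.partialSums_cons, List.countP_map, Function.comp_def, hxs, hx, ih]
  | @cons_odd x y l hx hy _ ih =>
    have hxys : ∀ s, Odd (x + (y + s)) ↔ Odd s := fun s => by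
      simp only [Nat.odd_iff] at *; omega
    simp [List.partialSums_cons, List.countP_map, Function.comp_def, hxys, hx, hy, ih]
    omega

end OddPartsPaired

theorem global_nilpotent_stmt1_general (n : ℕ) (μ : List ℕ)
    (hsorted : μ.Pairwise (· ≥ ·)) (hsum : μ.sum = 2 * n)
    (hoddmult : ∀ x ∈ μ, Odd x → Even (μ.count x)) :
    4 * ∑ j ∈ Finset.Icc 1 n, nIdx μ (2 * j) =
      2 * n + (∑ j ∈ Finset.Icc 1 (2 * n), (μ.countP (fun x => decide (j ≤ x))) ^ 2)
        + μ.countP (fun x => decide (Odd x)) := by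
  have hnIdx :
      ∑ j ∈ Icc 1 n, nIdx μ (2 * j) = ∑ j ∈ Icc 1 n, μ.partialSums.countP (· < 2 * j) :=
    sum_congr rfl fun j hj => nIdx_eq_countP_partialSums (hsum ▸ by simp at hj; omega)
  have hpartial := two_mul_sum_countP_lt_two_mul_add_sum (n := n) (ps := μ.partialSums)
    fun s hs => hsum ▸ List.le_sum_of_mem_partialSums hs
  have hdual := sum_sq_countP_le_add_two_mul_sum_partialSums (N := 2 * n) hsorted
    fun x hx => hsum ▸ List.le_sum_of_mem hx
  have hodd := (OddPartsPaired.of_pairwise_ge hsorted hoddmult).countP_odd_eq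
  rw [List.length_partialSums] at hpartial
  rw [hsum] at hdual
  rw [hnIdx]
  linarith

/-- For a partition `μ = (m₁ ≥ ⋯ ≥ m_k)` of `2n` in which every odd part
occurs with even multiplicity (the Jordan type of a nilpotent element of `sp_{2n}`),
`4·Σ_{j=1}^n n(μ,2j) = 2n + Σ_j μ̃_j² + #{i : m_i odd}`, where `μ̃` is the dual partition
(`μ̃_j = 0` for `j > m₁`, so the dual sum may be taken over `1 ≤ j ≤ 2n`). -/
theorem global_nilpotent_stmt1 (n : ℕ) (hn : 0 < n) (μ : List ℕ)
    (hpos : ∀ x ∈ μ, 0 < x) (hsorted : μ.Pairwise (· ≥ ·)) (hsum : μ.sum = 2 * n)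
    (hoddmult : ∀ x ∈ μ, Odd x → Even (μ.count x)) :
    4 * ∑ j ∈ Finset.Icc 1 n, nIdx μ (2 * j) =
      2 * n + (∑ j ∈ Finset.Icc 1 (2 * n), (μ.countP (fun x => decide (j ≤ x))) ^ 2)
        + μ.countP (fun x => decide (Odd x)) :=
  global_nilpotent_stmt1_general n μ hsorted hsum hoddmult
end

section
/- Let e be a nilpotent m×m complex matrix of Jordan type the partition μ = (m_1 ≥ ⋯ ≥ m_k) of m. Then for every matrix γ ∈ M_m(ℂ[[z]]) whose constant term γ(0) equals e (i.e. γ ∈ e + z·M_m(ℂ[[z]])), one has ν_z(F_j(γ)) ≥ n(μ, j) for every 1 ≤ j ≤ m. -/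
open Finset Module

section AdaptedBasis

variable {K V : Type*} [DivisionRing K] [AddCommGroup V] [Module K V]

theorem span_inter_eq_of_subset {B B' : Set V} {W : Submodule K V}
    (hB : Submodule.span K (B ∩ W) = W) (hBB' : B ⊆ B') : Submodule.span K (B' ∩ W) = W :=
  le_antisymm (Submodule.span_le.2 Set.inter_subset_right)
    (hB.symm.le.trans (Submodule.span_mono (Set.inter_subset_inter_left _ hBB')))

theorem exists_linearIndepOn_span_inter_eq (F : ℕ →o Submodule K V) (t : ℕ) :
    ∃ B : Set V, LinearIndepOn K id B ∧ B ⊆ F t ∧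
      ∀ s < t, Submodule.span K (B ∩ F s) = F s := by
  induction t with
  | zero => exact ⟨∅, linearIndepOn_empty K id, Set.empty_subset _, by simp⟩
  | succ t ih =>
    obtain ⟨B, hB, hBF, hspan⟩ := ih
    obtain ⟨B', hB'F, hBB', hFB', hB'⟩ := exists_linearIndepOn_id_extension hB hBF
    refine ⟨B', hB', hB'F.trans (F.monotone t.le_succ), fun s hs => ?_⟩
    rcases Nat.lt_succ_iff_lt_or_eq.mp hs with hs | rfl
    · exact span_inter_eq_of_subset (hspan s hs) hBB'
    · rw [Set.inter_eq_left.mpr hB'F]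
      exact le_antisymm (Submodule.span_le.2 hB'F) fun x hx => hFB' hx

theorem exists_basis_span_range_inter_eq [IsNoetherian K V] {ι : Type*} (b₀ : Basis ι K V)
    (F : ℕ →o Submodule K V) :
    ∃ b : Basis ι K V, ∀ t, Submodule.span K (Set.range b ∩ F t) = F t := by
  obtain ⟨N, hN⟩ := monotone_stabilizes_iff_noetherian.mpr ‹_› F
  obtain ⟨B, hB, -, hspan⟩ := exists_linearIndepOn_span_inter_eq F (N + 1)
  let b := (Basis.extend hB).reindex ((Basis.extend hB).indexEquiv b₀)
  have hBb : B ⊆ Set.range b := by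
    rw [Basis.range_reindex, Basis.range_extend]
    exact Basis.subset_extend hB
  refine ⟨b, fun t => ?_⟩
  rcases le_or_gt t N with ht | ht
  · exact span_inter_eq_of_subset (hspan t (Nat.lt_succ_of_le ht)) hBb
  · rw [← hN t ht.le]
    exact span_inter_eq_of_subset (hspan N N.lt_succ_self) hBb

namespace Module.Basis

variable {ι : Type*} (b : Basis ι K V) {W : Submodule K V}

theorem mem_of_repr_ne_zero (hW : Submodule.span K (Set.range b ∩ W) = W) {v : V} (hv : v ∈ W)
    {i : ι} (hi : b.repr v i ≠ 0) : b i ∈ W := by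
  rw [← hW, ← Set.image_preimage_eq_range_inter, b.mem_span_image] at hv
  exact hv (Finsupp.mem_support_iff.2 hi)

theorem card_filter_mem_eq_finrank [Fintype ι] [DecidablePred (b · ∈ W)]
    (hW : Submodule.span K (Set.range b ∩ W) = W) : #{i | b i ∈ W} = finrank K W := by
  have hrange : Set.range (fun i : {i // b i ∈ W} => b i) = Set.range b ∩ W := by
    rw [← Set.image_preimage_eq_range_inter, Set.image_eq_range]; rfl
  have := finrank_span_eq_card (b := fun i : {i // b i ∈ W} => b i)
    (b.linearIndependent.comp _ Subtype.val_injective)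
  rw [hrange, hW] at this
  rw [this, Fintype.card_subtype]

end Module.Basis

end AdaptedBasis

namespace Module.End

section Level

variable {R M : Type*} [Semiring R] [AddCommMonoid M] [Module R M] (f : Module.End R M)

noncomputable def kerLevel (x : M) : ℕ := sInf {s | (f ^ (s + 1)) x = 0}

variable {f}

theorem kerLevel_lt_iff (hf : IsNilpotent f) {x : M} (hx : x ≠ 0) {s : ℕ} :
    f.kerLevel x < s ↔ (f ^ s) x = 0 := by
  obtain ⟨N, hN⟩ := hf
  have hmem : (f ^ (f.kerLevel x + 1)) x = 0 :=
    Nat.sInf_mem (s := {s | (f ^ (s + 1)) x = 0})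
      ⟨N, pow_map_zero_of_le N.le_succ (by simp [hN])⟩
  cases s with
  | zero => simpa using hx
  | succ s =>
    exact ⟨fun h => pow_map_zero_of_le (by omega) hmem,
      fun h => Nat.lt_succ_of_le (Nat.sInf_le h)⟩

end Level

variable {K V : Type*} [Field K] [AddCommGroup V] [Module K V] {f : Module.End K V}
  {ι : Type*} (b : Basis ι K V)
  (hb : ∀ t, Submodule.span K (Set.range b ∩ LinearMap.ker (f ^ t)) = LinearMap.ker (f ^ t))
include hb

theorem toMatrix_eq_zero_of_kerLevel_le [Fintype ι] [DecidableEq ι] (hf : IsNilpotent f)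
    {i l : ι} (h : f.kerLevel (b l) ≤ f.kerLevel (b i)) : LinearMap.toMatrix b b f i l = 0 := by
  by_contra hne
  rw [LinearMap.toMatrix_apply] at hne
  have hfl : f (b l) ∈ LinearMap.ker (f ^ f.kerLevel (b l)) := by
    rw [LinearMap.mem_ker, ← mul_apply, ← pow_succ, ← kerLevel_lt_iff hf (b.ne_zero l)]
    exact lt_add_one _
  have := (kerLevel_lt_iff hf (b.ne_zero i)).mpr (b.mem_of_repr_ne_zero (hb _) hfl hne)
  omega

theorem card_kerLevel_eq_add_finrank_range [Fintype ι] [FiniteDimensional K V]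
    (hf : IsNilpotent f) (s : ℕ) :
    #{i | f.kerLevel (b i) = s} + finrank K (LinearMap.range (f ^ (s + 1)))
      = finrank K (LinearMap.range (f ^ s)) := by
  classical
  have hcard (t : ℕ) : #{i | f.kerLevel (b i) < t} + finrank K (LinearMap.range (f ^ t))
      = finrank K V := by
    simp_rw [kerLevel_lt_iff hf (b.ne_zero _), ← LinearMap.mem_ker]
    rw [b.card_filter_mem_eq_finrank (hb t), add_comm, LinearMap.finrank_range_add_finrank_ker]
  have hsplit : #{i | f.kerLevel (b i) < s + 1}
      = #{i | f.kerLevel (b i) < s} + #{i | f.kerLevel (b i) = s} := by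
    rw [← card_union_of_disjoint (disjoint_filter.2 fun _ _ h => h.ne), ← filter_or]
    congr 1
    ext
    simp only [mem_filter, mem_univ, true_and]
    omega
  have := hcard s
  have := hcard (s + 1)
  omega

end Module.End



namespace List

theorem sum_map_tsub_eq_add_countP (l : List ℕ) (s : ℕ) :
    (l.map (fun x => x - s)).sum = (l.map (fun x => x - (s + 1))).sum + l.countP (s < ·) := by
  induction l with
  | nil => simp
  | cons x l ih =>
    simp only [map_cons, sum_cons, countP_cons, ih, decide_eq_true_eq]
    split <;> omega

theorem countP_lt_take_eq_min {l : List ℕ} (hl : l.Pairwise (· ≥ ·)) (s r : ℕ) :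
    (l.take r).countP (s < ·) = min (l.countP (s < ·)) r := by
  induction l generalizing r with
  | nil => simp
  | cons x l ih =>
    rw [pairwise_cons] at hl
    cases r with
    | zero => simp
    | succ r =>
      simp only [take_succ_cons, countP_cons, ih hl.2, decide_eq_true_eq]
      by_cases hx : s < x
      · simp only [hx, if_true]
        omega
      · have hzero : l.countP (s < ·) = 0 :=
          countP_eq_zero.2 fun y hy => by simpa using (hl.1 y hy).trans (not_lt.1 hx)
        simp [hx, hzero]

theorem sum_countP_lt_le_sum (T : Finset ℕ) (l : List ℕ) :
    ∑ s ∈ T, l.countP (s < ·) ≤ l.sum := by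
  induction l with
  | nil => simp
  | cons x l ih =>
    simp only [countP_cons, decide_eq_true_eq, sum_add_distrib, sum_boole, sum_cons]
    have : #{s ∈ T | s < x} ≤ x :=
      (card_le_card fun s hs => Finset.mem_range.2 (Finset.mem_filter.1 hs).2).trans
        (card_range x).le
    push_cast
    omega

end List

section Ascents

variable {α : Type*} (σ : Equiv.Perm α) (lvl : α → ℕ)

theorem pow_apply_add_le_of_forall_lt {i : α} {t : ℕ}
    (h : ∀ u < t, lvl ((σ ^ (u + 1)) i) < lvl ((σ ^ u) i)) :
    lvl ((σ ^ t) i) + t ≤ lvl i := by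
  induction t with
  | zero => simp
  | succ t ih =>
    have := h t t.lt_succ_self
    have := ih fun u hu => h u (Nat.lt_succ_of_lt hu)
    omega

-- Send `i` to the first weak ascent on its forward `σ`-orbit. The level drops strictly on the way,
-- so two points of the same level cannot reach the same ascent.
theorem card_filter_eq_le_card_ascents [Fintype α] (s : ℕ) :
    #{i | lvl i = s} ≤ #{i | lvl i ≤ lvl (σ i)} := by
  have hex (i : α) : ∃ t, lvl ((σ ^ t) i) ≤ lvl ((σ ^ (t + 1)) i) := by
    by_contra! h
    have := pow_apply_add_le_of_forall_lt σ lvl (t := lvl i + 1) fun u _ => h u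
    omega
  have hfirst (i : α) : ∃ t, lvl ((σ ^ t) i) ≤ lvl ((σ ^ (t + 1)) i) ∧
      ∀ u < t, lvl ((σ ^ (u + 1)) i) < lvl ((σ ^ u) i) :=
    ⟨Nat.find (hex i), Nat.find_spec (hex i), fun u hu => not_le.1 (Nat.find_min (hex i) hu)⟩
  choose T hascent hdescent using hfirst
  refine card_le_card_of_injOn (fun i => (σ ^ T i) i) (fun i _ => ?_) fun i hi i' hi' heq => ?_
  · simpa [pow_succ', Equiv.Perm.mul_apply] using hascent i
  wlog hle : T i ≤ T i' generalizing i i'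
  · exact (this i' hi' i hi heq.symm (le_of_not_ge hle)).symm
  have hi_eq : i = (σ ^ (T i' - T i)) i' := (σ ^ T i).injective <| by
    rw [← Equiv.Perm.mul_apply, ← pow_add, Nat.add_sub_cancel' hle]
    exact heq
  have := pow_apply_add_le_of_forall_lt σ lvl
    fun u (hu : u < T i' - T i) => hdescent i' u (by omega)
  simp only [coe_filter, mem_univ, true_and, Set.mem_ofPred_eq] at hi hi'
  rw [← hi_eq] at this
  rwa [show T i' - T i = 0 by omega, pow_zero, Equiv.Perm.one_apply] at hi_eq

theorem card_le_sum_take_card_ascents [Fintype α] [DecidableEq α] {μ : List ℕ}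
    (hμ : μ.Pairwise (· ≥ ·)) (hfiber : ∀ s, #{i | lvl i = s} ≤ μ.countP (s < ·)) :
    Fintype.card α ≤ (μ.take #{i | lvl i ≤ lvl (σ i)}).sum :=
  calc Fintype.card α = ∑ s ∈ univ.image lvl, #{i | lvl i = s} :=
        card_eq_sum_card_image lvl univ
    _ ≤ ∑ s ∈ univ.image lvl, (μ.take #{i | lvl i ≤ lvl (σ i)}).countP (s < ·) :=
      sum_le_sum fun s _ => by
        rw [List.countP_lt_take_eq_min hμ]
        exact le_min (hfiber s) (card_filter_eq_le_card_ascents σ lvl s)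
    _ ≤ _ := List.sum_countP_lt_le_sum _ _

end Ascents

open PowerSeries in
theorem X_pow_dvd_det_of_constantCoeff_eq_zero {R α : Type*} [CommRing R] [Fintype α]
    [DecidableEq α] (A : Matrix α α R⟦X⟧) (lvl : α → ℕ)
    (hA : ∀ i l, lvl l ≤ lvl i → constantCoeff (A i l) = 0) {n : ℕ}
    (hn : ∀ σ : Equiv.Perm α, n ≤ #{i | lvl i ≤ lvl (σ i)}) : X ^ n ∣ A.det := by
  rw [Matrix.det_apply]
  refine dvd_sum fun σ _ => ?_
  rw [Units.smul_def]
  refine dvd_zsmul_of_dvd _ ((pow_dvd_pow X (hn σ)).trans ?_)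
  calc X ^ #{i | lvl i ≤ lvl (σ i)} = ∏ i ∈ {i | lvl i ≤ lvl (σ i)}, X :=
        (prod_const _).symm
    _ ∣ ∏ i ∈ {i | lvl i ≤ lvl (σ i)}, A (σ i) i :=
      prod_dvd_prod_of_dvd _ _ fun i hi => X_dvd_iff.2 (hA _ _ (mem_filter.1 hi).2)
    _ ∣ ∏ i, A (σ i) i := prod_dvd_prod_of_subset _ _ _ (filter_subset _ _)

theorem Matrix.charpoly_mul_mul_eq_of_mul_eq_one {R n : Type*} [CommRing R] [Fintype n]
    [DecidableEq n] {A B : Matrix n n R} (N : Matrix n n R) (h : B * A = 1) :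
    (A * N * B).charpoly = N.charpoly := by
  rw [Matrix.charpoly_mul_comm, ← mul_assoc, h, one_mul]

open PowerSeries in
theorem exists_charpoly_eq_map_constantCoeff_eq_toMatrix {R n : Type*} [CommRing R] [Fintype n]
    [DecidableEq n] (b : Basis n R (n → R)) (γ : Matrix n n R⟦X⟧) :
    ∃ δ : Matrix n n R⟦X⟧, δ.charpoly = γ.charpoly ∧
      δ.map constantCoeff = LinearMap.toMatrix b b (Matrix.toLin' (γ.map constantCoeff)) := by
  refine ⟨(b.toMatrix (Pi.basisFun R n)).map C * γ * ((Pi.basisFun R n).toMatrix b).map C,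
    Matrix.charpoly_mul_mul_eq_of_mul_eq_one _ ?_, ?_⟩
  · rw [← Matrix.map_mul, Basis.toMatrix_mul_toMatrix_flip,
      Matrix.map_one _ (map_zero _) (map_one _)]
  · rw [← basis_toMatrix_mul_linearMap_toMatrix_mul_basis_toMatrix b (Pi.basisFun R n) b
      (Pi.basisFun R n), LinearMap.toMatrix_eq_toMatrix', LinearMap.toMatrix'_toLin']
    simp [Matrix.map_mul, Matrix.map_map, Function.comp_def]

open PowerSeries in
theorem nIdx_le_order_charpoly_coeff {R ι : Type*} [CommRing R] [Fintype ι] [DecidableEq ι]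
    (δ : Matrix ι ι R⟦X⟧) (lvl : ι → ℕ)
    (hδ : ∀ i l, lvl l ≤ lvl i → constantCoeff (δ i l) = 0) {μ : List ℕ}
    (hμ : μ.Pairwise (· ≥ ·)) (hfiber : ∀ s, #{i | lvl i = s} ≤ μ.countP (s < ·))
    {j : ℕ} (hj : j ≤ Fintype.card ι) :
    (nIdx μ j : ℕ∞) ≤ (δ.charpoly.coeff (Fintype.card ι - j)).order := by
  rw [δ.charpoly_coeff_eq_sum_minors j hj]
  refine nat_le_order _ _ fun i hi => X_pow_dvd_iff.1 ?_ i hi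
  refine dvd_mul_of_dvd_right (dvd_sum fun S hS => ?_) _
  refine X_pow_dvd_det_of_constantCoeff_eq_zero _ (fun i : S => lvl i) (fun i l h => hδ _ _ h)
    fun σ => Nat.sInf_le ?_
  have hSfiber (s : ℕ) : #{i : S | lvl i = s} ≤ #{i | lvl i = s} :=
    card_le_card_of_injOn Subtype.val (fun i hi => by simpa using hi) Subtype.val_injective.injOn
  simpa [(mem_powersetCard.1 hS).2] using
    card_le_sum_take_card_ascents σ _ hμ fun s => (hSfiber s).trans (hfiber s)

theorem global_nilpotent_stmt4_general (m : ℕ) (μ : List ℕ)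
    (hsorted : μ.Pairwise (· ≥ ·))
    (e : Matrix (Fin m) (Fin m) ℂ)
    (hJordan : ∀ s : ℕ, (e ^ s).rank = (μ.map (fun x => x - s)).sum)
    (γ : Matrix (Fin m) (Fin m) (PowerSeries ℂ))
    (hγ : γ.map ((PowerSeries.constantCoeff (R := ℂ))) = e)
    (j : ℕ) (hjm : j ≤ m) :
    (nIdx μ j : ℕ∞) ≤ (γ.charpoly.coeff (m - j)).order := by
  set f : Module.End ℂ (Fin m → ℂ) := Matrix.toLin' e
  have hrank (s : ℕ) : finrank ℂ (LinearMap.range (f ^ s)) = (e ^ s).rank := by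
    rw [← Matrix.toLin'_pow]
    rfl
  have hf : IsNilpotent f := by
    refine ⟨μ.sum, LinearMap.range_eq_bot.1 (Submodule.finrank_eq_zero.1 ?_)⟩
    rw [hrank, hJordan]
    exact List.sum_eq_zero fun y hy => by
      obtain ⟨x, hx, rfl⟩ := List.mem_map.1 hy
      exact Nat.sub_eq_zero_of_le (List.le_sum_of_mem hx)
  obtain ⟨b, hb⟩ := exists_basis_span_range_inter_eq (Pi.basisFun ℂ (Fin m)) f.iterateKer
  have hfiber (s : ℕ) : #{i | f.kerLevel (b i) = s} ≤ μ.countP (s < ·) := by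
    have := Module.End.card_kerLevel_eq_add_finrank_range b hb hf s
    rw [hrank, hrank, hJordan, hJordan, List.sum_map_tsub_eq_add_countP μ s] at this
    omega
  obtain ⟨δ, hδ, hδ0⟩ := exists_charpoly_eq_map_constantCoeff_eq_toMatrix b γ
  rw [hγ] at hδ0
  have hδlvl (i l : Fin m) (h : f.kerLevel (b l) ≤ f.kerLevel (b i)) :
      PowerSeries.constantCoeff (δ i l) = 0 := by
    rw [← Matrix.map_apply (M := δ) (f := PowerSeries.constantCoeff), hδ0]
    exact Module.End.toMatrix_eq_zero_of_kerLevel_le b hb hf h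
  simpa [hδ] using nIdx_le_order_charpoly_coeff δ _ hδlvl hsorted hfiber (by simpa using hjm)

/-- Let `e` be a nilpotent `m×m` complex matrix of Jordan type the
partition `μ = (m₁ ≥ ⋯ ≥ m_k)` of `m` (i.e. `rank(e^s) = Σᵢ max(mᵢ − s, 0)` for all `s`).
Then for every `γ ∈ Mₘ(ℂ[[z]])` with constant term `e`, the coefficient
`F_j(γ)` of `T^{m−j}` in the characteristic polynomial `det(T·Id − γ)` satisfies
`ν_z(F_j(γ)) ≥ n(μ,j)` for all `1 ≤ j ≤ m`. -/
theorem global_nilpotent_stmt4 (m : ℕ) (hm : 0 < m) (μ : List ℕ)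
    (hpos : ∀ x ∈ μ, 0 < x) (hsorted : μ.Pairwise (· ≥ ·)) (hsum : μ.sum = m)
    (e : Matrix (Fin m) (Fin m) ℂ)
    (hJordan : ∀ s : ℕ, (e ^ s).rank = (μ.map (fun x => x - s)).sum)
    (γ : Matrix (Fin m) (Fin m) (PowerSeries ℂ))
    (hγ : γ.map ((PowerSeries.constantCoeff (R := ℂ))) = e)
    (j : ℕ) (hj1 : 1 ≤ j) (hjm : j ≤ m) :
    (nIdx μ j : ℕ∞) ≤ (γ.charpoly.coeff (m - j)).order :=
  global_nilpotent_stmt4_general m μ hsorted e hJordan γ hγ j hjm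
end

section
/- Let μ = (m_1 ≥ m_2 ≥ ⋯ ≥ m_r) be a partition of m, and let γ ∈ M_m(ℂ[[z]]) be a block diagonal matrix with diagonal blocks γ_1, …, γ_r of sizes m_1, …, m_r such that the constant term γ_i(0) ∈ M_{m_i}(ℂ) is nilpotent for every i. Then ν_z(F_j(γ)) ≥ n(μ, j) for every 1 ≤ j ≤ m. -/
/-!
The characteristic polynomial of a block diagonal matrix is the product of the characteristic
polynomials `p_i` of its blocks. Since `γ_i(0)` is nilpotent, `p_i ≡ T^{m_i}` modulo `z`, so
every coefficient of `p_i` below the leading one has positive `z`-adic order. A term of the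
coefficient of `T^{m-j}` in `∏ p_i` picks `T^{l_i}` from each factor with `∑ l_i = m - j`;
the blocks with `l_i < m_i` must have total size at least `j`, so there are at least as many
of them as the number `n(μ, j)` of largest parts needed to reach `j`, and each contributes a
factor `z`.
-/

open Finset Polynomial

namespace Matrix

variable {o : Type*} [DecidableEq o] {m' : o → Type*}

theorem toSquareBlock_blockDiagonal' {α : Type*} [Zero α] (M : ∀ i, Matrix (m' i) (m' i) α)
    (a : o) :
    (blockDiagonal' M).toSquareBlock Sigma.fst a =
      (M a).submatrix (Equiv.sigmaSubtype a) (Equiv.sigmaSubtype a) := by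
  ext ⟨⟨i, x⟩, hi⟩ ⟨⟨j, y⟩, hj⟩
  dsimp only at hi hj
  subst hi hj
  simp [toSquareBlock_def, blockDiagonal'_apply_eq]

variable [Fintype o] [∀ i, Fintype (m' i)] [∀ i, DecidableEq (m' i)]
  {R : Type*} [CommRing R]

theorem det_blockDiagonal' (M : ∀ i, Matrix (m' i) (m' i) R) :
    (blockDiagonal' M).det = ∏ i, (M i).det := by
  let : LinearOrder o := LinearOrder.lift' _ (Fintype.equivFin o).injective
  simp only [(blockTriangular_blockDiagonal' M).det, toSquareBlock_blockDiagonal',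
    det_submatrix_equiv_self]
  refine prod_subset (subset_univ _) fun a _ ha => ?_
  have : IsEmpty (m' a) := ⟨fun x => ha (mem_image_of_mem Sigma.fst (mem_univ ⟨a, x⟩))⟩
  exact det_isEmpty

theorem charmatrix_blockDiagonal' (M : ∀ i, Matrix (m' i) (m' i) R) :
    charmatrix (blockDiagonal' M) = blockDiagonal' fun i => charmatrix (M i) := by
  ext ⟨i, x⟩ ⟨j, y⟩
  by_cases hij : i = j
  · subst hij
    by_cases hxy : x = y
    · subst hxy; simp [charmatrix_apply_eq, blockDiagonal'_apply_eq]
    · simp [charmatrix_apply_ne, blockDiagonal'_apply_eq, hxy]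
  · simp [charmatrix_apply_ne, blockDiagonal'_apply_ne, hij]

theorem charpoly_blockDiagonal' (M : ∀ i, Matrix (m' i) (m' i) R) :
    (blockDiagonal' M).charpoly = ∏ i, (M i).charpoly := by
  rw [charpoly, charmatrix_blockDiagonal', det_blockDiagonal']
  rfl

end Matrix

theorem Matrix.apply_charpoly_coeff_eq_zero_of_isNilpotent_map {A R n : Type*} [CommRing A]
    [CommRing R] [IsReduced R] [Fintype n] [DecidableEq n] (f : A →+* R) (M : Matrix n n A)
    (hM : IsNilpotent (M.map f)) {k : ℕ} (hk : k < Fintype.card n) :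
    f (M.charpoly.coeff k) = 0 := by
  have h :=
    (Polynomial.isNilpotent_iff.mp (isNilpotent_charpoly_sub_pow_of_isNilpotent hM) k).eq_zero
  rwa [coeff_sub, coeff_X_pow, if_neg hk.ne, sub_zero, charpoly_map, coeff_map] at h

theorem PowerSeries.card_le_order_prod {R ι : Type*} [CommSemiring R] [Fintype ι]
    (f : ι → PowerSeries R) (S : Finset ι) (hS : ∀ i ∈ S, 1 ≤ (f i).order) :
    (#S : ℕ∞) ≤ (∏ i, f i).order :=
  calc (#S : ℕ∞) = ∑ i ∈ S, 1 := by simp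
    _ ≤ ∑ i ∈ S, (f i).order := sum_le_sum hS
    _ ≤ ∑ i, (f i).order := sum_le_sum_of_subset (subset_univ S)
    _ ≤ (∏ i, f i).order := le_order_prod f univ

theorem PowerSeries.le_order_sum {R ι : Type*} [Semiring R] (f : ι → PowerSeries R)
    (s : Finset ι) {n : ℕ∞} (h : ∀ i ∈ s, n ≤ (f i).order) :
    n ≤ (∑ i ∈ s, f i).order :=
  le_order _ _ fun k hk => by
    rw [map_sum]
    exact sum_eq_zero fun i hi => coeff_of_lt_order k (hk.trans_le (h i hi))

theorem Polynomial.coeff_prod {R ι : Type*} [CommSemiring R] [DecidableEq ι] (f : ι → R[X])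
    (d : ℕ) (s : Finset ι) :
    (∏ i ∈ s, f i).coeff d = ∑ l ∈ finsuppAntidiag s d, ∏ i ∈ s, (f i).coeff (l i) := by
  simpa [← coeff_coe, ← coeToPowerSeries.ringHom_apply, map_prod]
    using PowerSeries.coeff_prod (fun i => (f i : PowerSeries R)) d s

theorem Polynomial.le_order_coeff_prod {R ι : Type*} [CommSemiring R] [Fintype ι] [DecidableEq ι]
    (p : ι → (PowerSeries R)[X]) (d : ι → ℕ) (hdeg : ∀ i, (p i).natDegree ≤ d i)
    (hlow : ∀ i, ∀ k < d i, 1 ≤ ((p i).coeff k).order) {n N : ℕ}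
    (hN : ∀ S : Finset ι, ∑ i ∈ Sᶜ, d i ≤ n → N ≤ #S) :
    (N : ℕ∞) ≤ ((∏ i, p i).coeff n).order := by
  rw [coeff_prod]
  refine PowerSeries.le_order_sum _ _ fun l hl => ?_
  rw [mem_finsuppAntidiag] at hl
  by_cases! hbig : ∃ i, d i < l i
  · obtain ⟨i, hi⟩ := hbig
    rw [prod_eq_zero (mem_univ i) (coeff_eq_zero_of_natDegree_lt ((hdeg i).trans_lt hi)),
      PowerSeries.order_zero]
    exact le_top
  set S : Finset ι := {i | l i < d i}
  have hSc : ∑ i ∈ Sᶜ, d i ≤ n := by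
    calc ∑ i ∈ Sᶜ, d i = ∑ i ∈ Sᶜ, l i :=
          sum_congr rfl fun i hi => le_antisymm (by simpa [S] using hi) (hbig i)
      _ ≤ ∑ i, l i := sum_le_sum_of_subset (subset_univ _)
      _ = n := hl.1
  exact (Nat.cast_le.mpr (hN S hSc)).trans
    (PowerSeries.card_le_order_prod _ S fun i hi => hlow i _ (by simpa [S] using hi))

theorem Fin.sum_le_sum_lt_card_of_antitone {M : Type*} [AddCommMonoid M] [PartialOrder M]
    [IsOrderedAddMonoid M] {n : ℕ} {f : Fin n → M} (hf : Antitone f) (S : Finset (Fin n)) :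
    ∑ i ∈ S, f i ≤ ∑ i with i.val < #S, f i := by
  induction S using Finset.induction_on_max with
  | empty => simp
  | insert a s ha ih =>
    have hs : #s ≤ a := by
      simpa using card_le_card (fun x hx => mem_Iio.mpr (ha x hx) : s ⊆ Iio a)
    have hnot : a ∉ s := fun h => lt_irrefl a (ha a h)
    have hfirst : ({i | i.val < #s + 1} : Finset (Fin n)) =
        insert (⟨#s, by omega⟩ : Fin n) ({i | i.val < #s} : Finset (Fin n)) := by
      ext i; simp [Fin.ext_iff]; omega
    rw [sum_insert hnot, card_insert_of_notMem hnot, hfirst, sum_insert (by simp)]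
    exact add_le_add (hf (Fin.le_def.mpr hs)) ih

theorem List.sum_get_le_sum_take_card {M : Type*} [AddCommMonoid M] [PartialOrder M]
    [IsOrderedAddMonoid M] {l : List M} (hl : l.Pairwise (· ≥ ·)) (S : Finset (Fin l.length)) :
    ∑ i ∈ S, l.get i ≤ (l.take #S).sum := by
  have htake := List.sum_take_ofFn l.get #S
  rw [List.ofFn_get] at htake
  rw [htake]
  exact Fin.sum_le_sum_lt_card_of_antitone hl.sortedGE.antitone_get S

theorem global_nilpotent_stmt6_general (μ : List ℕ)
    (hsorted : μ.Pairwise (· ≥ ·))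
    (γb : ∀ i : Fin μ.length, Matrix (Fin (μ.get i)) (Fin (μ.get i)) (PowerSeries ℂ))
    (hnil : ∀ i : Fin μ.length, IsNilpotent ((γb i).map (PowerSeries.constantCoeff (R := ℂ))))
    (j : ℕ) (hjm : j ≤ μ.sum) :
    (nIdx μ j : ℕ∞) ≤ ((Matrix.blockDiagonal' γb).charpoly.coeff (μ.sum - j)).order := by
  have hsum : ∑ i, μ.get i = μ.sum := by simp
  rw [Matrix.charpoly_blockDiagonal']
  refine le_order_coeff_prod (fun i => (γb i).charpoly) (fun i => μ.get i) (fun i => by simp)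
    (fun i k hk => ?_) fun S hS => Nat.sInf_le ?_
  · rw [PowerSeries.one_le_order_iff_constCoeff_eq_zero]
    exact Matrix.apply_charpoly_coeff_eq_zero_of_isNilpotent_map _ _ (hnil i) (by simpa using hk)
  · calc j ≤ ∑ i ∈ S, μ.get i := by have := sum_add_sum_compl S μ.get; omega
      _ ≤ (μ.take #S).sum := List.sum_get_le_sum_take_card hsorted S

/-- Let `μ = (m₁ ≥ ⋯ ≥ m_r)` be a partition of `m = Σ mᵢ` and let `γ` be
the block diagonal matrix over `ℂ[[z]]` with diagonal blocks `γ₁, …, γ_r` of sizes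
`m₁, …, m_r`, such that each constant term `γᵢ(0) ∈ M_{mᵢ}(ℂ)` is nilpotent. Then the
coefficient `F_j(γ)` of `T^{m−j}` in `det(T·Id − γ)` satisfies `ν_z(F_j(γ)) ≥ n(μ,j)`
for all `1 ≤ j ≤ m`. -/
theorem global_nilpotent_stmt6 (μ : List ℕ)
    (hpos : ∀ x ∈ μ, 0 < x) (hsorted : μ.Pairwise (· ≥ ·))
    (γb : ∀ i : Fin μ.length, Matrix (Fin (μ.get i)) (Fin (μ.get i)) (PowerSeries ℂ))
    (hnil : ∀ i : Fin μ.length, IsNilpotent ((γb i).map (PowerSeries.constantCoeff (R := ℂ))))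
    (j : ℕ) (hj1 : 1 ≤ j) (hjm : j ≤ μ.sum) :
    (nIdx μ j : ℕ∞) ≤ ((Matrix.blockDiagonal' γb).charpoly.coeff (μ.sum - j)).order :=
  global_nilpotent_stmt6_general μ hsorted γb hnil j hjm
end

section
/- Let e ∈ M_m(ℂ) be any nilpotent matrix and let M ∈ M_m(ℂ[[z]]) have vanishing constant term, M(0) = 0. Set γ = z^{−1}(e + M) ∈ M_m(ℂ((z))). Then for every 1 ≤ j ≤ m, ν_z(F_j(γ)) ≥ −(j − 1). -/
/-!
Write `γ = z⁻¹ • N` with `N = e + M` over `ℂ[[z]]`. The coefficient `F_j` is the `j`-th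
coefficient of the reversed characteristic polynomial `det (1 - T • A)`, which turns into
`p (c T)` under `A ↦ c • A`; hence `F_j(γ) = z⁻ʲ F_j(N)`. Reducing modulo `z`, the constant term
of `F_j(N)` is `F_j(e)`, and `det (1 - T • e) = 1` because `e` is nilpotent, so `F_j(N)` has
`z`-adic order at least `1`.
-/

open Polynomial

namespace Matrix

variable {n R S : Type*} [Fintype n] [DecidableEq n] [CommRing R] [CommRing S]

lemma coeff_charpoly_card_sub [Nontrivial R] (A : Matrix n n R) {k : ℕ}
    (hk : k ≤ Fintype.card n) :
    A.charpoly.coeff (Fintype.card n - k) = A.charpolyRev.coeff k := by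
  rw [← reverse_charpoly, coeff_reverse, charpoly_natDegree_eq_dim, revAt_le hk]

lemma charpolyRev_map (f : R →+* S) (A : Matrix n n R) :
    (A.map f).charpolyRev = A.charpolyRev.map f := by
  rw [charpolyRev, charpolyRev, ← coe_mapRingHom, RingHom.map_det]
  congr 1
  ext i j
  by_cases h : i = j <;> simp [h]

lemma charpolyRev_smul (c : R) (A : Matrix n n R) :
    (c • A).charpolyRev = A.charpolyRev.comp (C c * X) := by
  rw [charpolyRev, charpolyRev, ← coe_compRingHom_apply, RingHom.map_det]
  congr 1
  ext i j : 1
  by_cases h : i = j <;> simp [h, C_mul]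
  all_goals ring

lemma charpolyRev_eq_one_of_isNilpotent [IsReduced R] {A : Matrix n n R}
    (hA : IsNilpotent A) : A.charpolyRev = 1 := by
  obtain ⟨-, hnil⟩ :=
    Polynomial.isUnit_iff_coeff_isUnit_isNilpotent.mp (isUnit_charpolyRev_of_isNilpotent hA)
  ext k
  rcases eq_or_ne k 0 with rfl | hk
  · simp [coeff_zero_eq_eval_zero]
  · rw [(hnil k hk).eq_zero, coeff_one, if_neg hk]

end Matrix

lemma HahnSeries.coeff_single_mul_ofPowerSeries_eq_zero {R : Type*} [Semiring R]
    {x : PowerSeries R} (hx : PowerSeries.constantCoeff x = 0) (r : R) (j : ℕ) {i : ℤ}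
    (hi : i < 1 - j) : (single (-(j : ℤ)) r * ofPowerSeries ℤ R x).coeff i = 0 := by
  rw [show i = (i + j) + -(j : ℤ) by ring, coeff_single_mul_add, PowerSeries.coeff_coe]
  split_ifs with h
  · rw [mul_zero]
  · rw [show (i + j).natAbs = 0 by omega, PowerSeries.coeff_zero_eq_constantCoeff_apply, hx,
      mul_zero]

theorem global_nilpotent_stmt9_general (m : ℕ)
    (e : Matrix (Fin m) (Fin m) ℂ) (he : IsNilpotent e)
    (M : Matrix (Fin m) (Fin m) (PowerSeries ℂ))
    (hM : M.map (PowerSeries.constantCoeff (R := ℂ)) = 0)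
    (j : ℕ) (hj1 : 1 ≤ j) (hjm : j ≤ m) :
    ∀ i : ℤ, i < -((j : ℤ) - 1) →
      (((Matrix.of fun a b => ((HahnSeries.single (-1 : ℤ) (1 : ℂ)) *
          HahnSeries.ofPowerSeries ℤ ℂ (PowerSeries.C (R := ℂ) (e a b) + M a b) :
            LaurentSeries ℂ))).charpoly.coeff (m - j)).coeff i = 0 := by
  intro i hi
  let N : Matrix (Fin m) (Fin m) (PowerSeries ℂ) :=
    Matrix.of fun a b => PowerSeries.C (e a b) + M a b
  have hN0 : N.map PowerSeries.constantCoeff = e := by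
    ext a b
    simpa [N] using congrFun₂ hM a b
  have hFj : PowerSeries.constantCoeff (N.charpolyRev.coeff j) = 0 := by
    rw [← coeff_map, ← Matrix.charpolyRev_map, hN0, Matrix.charpolyRev_eq_one_of_isNilpotent he,
      coeff_one, if_neg (by omega)]
  have hγ : (Matrix.of fun a b => (HahnSeries.single (-1 : ℤ) (1 : ℂ) *
      HahnSeries.ofPowerSeries ℤ ℂ (PowerSeries.C (e a b) + M a b) : LaurentSeries ℂ)) =
      HahnSeries.single (-1 : ℤ) (1 : ℂ) • N.map (HahnSeries.ofPowerSeries ℤ ℂ) := rfl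
  have hcard : m - j = Fintype.card (Fin m) - j := by rw [Fintype.card_fin]
  have hjcard : j ≤ Fintype.card (Fin m) := by rwa [Fintype.card_fin]
  rw [hγ, hcard, Matrix.coeff_charpoly_card_sub _ hjcard, Matrix.charpolyRev_smul,
    comp_C_mul_X_coeff, Matrix.charpolyRev_map, coeff_map, HahnSeries.single_pow, one_pow,
    smul_neg, nsmul_one, mul_comm]
  exact HahnSeries.coeff_single_mul_ofPowerSeries_eq_zero hFj 1 j (by omega)

/-- Let `e ∈ Mₘ(ℂ)` be nilpotent and `M ∈ Mₘ(ℂ[[z]])` with vanishing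
constant term. Set `γ = z⁻¹(e + M) ∈ Mₘ(ℂ((z)))`. Then for every `1 ≤ j ≤ m`, the
coefficient `F_j(γ)` of `T^{m−j}` in `det(T·Id − γ)` satisfies `ν_z(F_j(γ)) ≥ −(j−1)`,
i.e. all Laurent coefficients of `F_j(γ)` in degrees `< −(j−1)` vanish. -/
theorem global_nilpotent_stmt9 (m : ℕ) (hm : 0 < m)
    (e : Matrix (Fin m) (Fin m) ℂ) (he : IsNilpotent e)
    (M : Matrix (Fin m) (Fin m) (PowerSeries ℂ))
    (hM : M.map (PowerSeries.constantCoeff (R := ℂ)) = 0)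
    (j : ℕ) (hj1 : 1 ≤ j) (hjm : j ≤ m) :
    ∀ i : ℤ, i < -((j : ℤ) - 1) →
      (((Matrix.of fun a b => ((HahnSeries.single (-1 : ℤ) (1 : ℂ)) *
          HahnSeries.ofPowerSeries ℤ ℂ (PowerSeries.C (R := ℂ) (e a b) + M a b) :
            LaurentSeries ℂ))).charpoly.coeff (m - j)).coeff i = 0 :=
  global_nilpotent_stmt9_general m e he M hM j hj1 hjm
end
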